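/- arXiv:2604.25272 — 8 statements merged into one kernel-verified Lean document; each statement's English description precedes it below -/
import Mathlib

section
/- Let 0 < λ_1 ≤ λ_2 ≤ … ≤ λ_N be positive reals and T > 0. Let ω ∈ {1,…,N} be the largest integer such that (∑_{i=1}^ω λ_i)/ω + T/ω − λ_ω > 0. Then the assignment t_i = (∑_{i=1}^ω λ_i)/ω + T/ω − λ_i for i = 1,…,ω and t_i = 0 for i = ω+1,…,N consists of nonnegative numbers summing to T, and it maximizes ∏_{i=1}^N (1 + t_i/λ_i) over all nonnegative reals t_1,…,t_N with ∑_{i=1}^N t_i = T. -/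
open Finset

lemma amgm_aux (n : ℕ) (hn : 0 < n) (μ : ℝ) (z : ℕ → ℝ)
    (hz : ∀ i ∈ range n, 0 ≤ z i) (hsum : ∑ i ∈ range n, z i ≤ n * μ) :
    ∏ i ∈ range n, z i ≤ μ ^ n := by
  have hn' : (0:ℝ) < n := by exact_mod_cast hn
  have h := Real.geom_mean_le_arith_mean_weighted (range n) (fun _ => 1/n) z
    (fun i _ => by positivity) (by simp; field_simp) hz
  have h2 : ∑ i ∈ range n, (1/(n:ℝ)) * z i ≤ μ := by
    rw [← Finset.mul_sum]
    calc (1/(n:ℝ)) * ∑ i ∈ range n, z i ≤ (1/n) * (n * μ) := by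
          apply mul_le_mul_of_nonneg_left hsum; positivity
      _ = μ := by field_simp
  have h3 : ∏ i ∈ range n, z i ^ ((1:ℝ)/n) ≤ μ := h.trans h2
  have h4 := pow_le_pow_left₀ (Finset.prod_nonneg fun i hi => Real.rpow_nonneg (hz i hi) _) h3 n
  calc ∏ i ∈ range n, z i = (∏ i ∈ range n, z i ^ ((1:ℝ)/n)) ^ n := by
        rw [← Finset.prod_pow]
        apply Finset.prod_congr rfl
        intro i hi
        rw [← Real.rpow_natCast (z i ^ ((1:ℝ)/n)) n, ← Real.rpow_mul (hz i hi)]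
        field_simp
        rw [Real.rpow_one]
    _ ≤ μ ^ n := h4

/-- The explicit water-filling assignment maximizes `∏ (1 + t_i / λ_i)` over the simplex
`{t : t_i ≥ 0, ∑ t_i = T}`, where `ω` is the largest index in `{1, …, N}` such that
`(∑_{i≤ω} λ_i)/ω + T/ω − λ_ω > 0`. -/
theorem stmt_0 (N : ℕ) (hN : 1 ≤ N) (lam : ℕ → ℝ) (T : ℝ)
    (hpos : ∀ i < N, 0 < lam i)
    (hmono : ∀ i j, i ≤ j → j < N → lam i ≤ lam j)
    (hT : 0 < T)
    (ω : ℕ) (hω1 : 1 ≤ ω) (hωN : ω ≤ N)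
    (hcond : (∑ i ∈ Finset.range ω, lam i) / ω + T / ω - lam (ω - 1) > 0)
    (hlargest : ∀ ω', ω < ω' → ω' ≤ N →
      ¬((∑ i ∈ Finset.range ω', lam i) / ω' + T / ω' - lam (ω' - 1) > 0))
    (t : ℕ → ℝ)
    (ht : ∀ i < ω, t i = (∑ j ∈ Finset.range ω, lam j) / ω + T / ω - lam i)
    (ht0 : ∀ i, ω ≤ i → i < N → t i = 0) :
    (∀ i < N, 0 ≤ t i) ∧ (∑ i ∈ Finset.range N, t i = T) ∧
      ∀ s : ℕ → ℝ, (∀ i < N, 0 ≤ s i) → (∑ i ∈ Finset.range N, s i = T) →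
        ∏ i ∈ Finset.range N, (1 + s i / lam i) ≤ ∏ i ∈ Finset.range N, (1 + t i / lam i) := by
  have hω0 : (0:ℝ) < ω := by exact_mod_cast hω1
  set S : ℝ := ∑ i ∈ Finset.range ω, lam i with hS
  set μ : ℝ := (S + T) / ω with hμdef
  have hμeq : S / ω + T / ω = μ := by rw [hμdef, add_div]
  have hμgt : lam (ω - 1) < μ := by rw [← hμeq]; linarith [hcond]
  have hω1N : ω - 1 < N := by omega
  have hμpos : 0 < μ := lt_trans (hpos _ hω1N) hμgt
  have hωμ : (ω:ℝ) * μ = S + T := by rw [hμdef]; field_simp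
  have htval : ∀ i < ω, t i = μ - lam i := by
    intro i hi; rw [ht i hi, ← hμeq]
  have hnn : ∀ i < N, 0 ≤ t i := by
    intro i hi
    by_cases h : i < ω
    · rw [htval i h]
      have : lam i ≤ lam (ω - 1) := hmono i (ω-1) (by omega) hω1N
      linarith
    · rw [ht0 i (by omega) hi]
  have hsplit_sum : ∀ f : ℕ → ℝ, ∑ i ∈ range N, f i
      = (∑ i ∈ range ω, f i) + ∑ i ∈ Ico ω N, f i := by
    intro f
    rw [range_eq_Ico, ← Finset.sum_Ico_consecutive f (Nat.zero_le ω) hωN, range_eq_Ico]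
  have hsum : ∑ i ∈ range N, t i = T := by
    rw [hsplit_sum]
    have h1 : ∑ i ∈ range ω, t i = (ω:ℝ) * μ - S := by
      rw [Finset.sum_congr rfl (fun i hi => htval i (mem_range.mp hi)),
        Finset.sum_sub_distrib, Finset.sum_const, card_range, nsmul_eq_mul]
    have h2 : ∑ i ∈ Ico ω N, t i = 0 :=
      Finset.sum_eq_zero fun i hi => ht0 i (mem_Ico.mp hi).1 (mem_Ico.mp hi).2
    rw [h1, h2, hωμ]; ring
  refine ⟨hnn, hsum, ?_⟩
  have htail : ∀ i, ω ≤ i → i < N → μ ≤ lam i := by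
    intro i hiω hiN
    have h := hlargest (ω + 1) (by omega) (by omega)
    push_neg at h
    have hrw : (ω + 1 - 1) = ω := by omega
    rw [hrw, Finset.sum_range_succ] at h
    have hω1' : (0:ℝ) < (ω:ℝ) + 1 := by positivity
    have hcast : ((ω + 1 : ℕ) : ℝ) = (ω:ℝ) + 1 := by push_cast; ring
    rw [hcast] at h
    have h' : S + lam ω + T ≤ ((ω:ℝ) + 1) * lam ω := by
      rw [← add_div, sub_nonpos, div_le_iff₀ hω1'] at h
      linarith [h]
    have hμlam : μ ≤ lam ω := by
      have : (ω:ℝ) * μ ≤ (ω:ℝ) * lam ω := by rw [hωμ]; linarith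
      exact le_of_mul_le_mul_left this hω0
    exact hμlam.trans (hmono ω i hiω hiN)
  intro s hs hssum
  have hlampos : ∀ i ∈ range N, 0 < lam i := fun i hi => hpos i (mem_range.mp hi)
  have hsplit_prod : ∀ f : ℕ → ℝ, ∏ i ∈ range N, f i
      = (∏ i ∈ range ω, f i) * ∏ i ∈ Ico ω N, f i := by
    intro f
    rw [range_eq_Ico, ← Finset.prod_Ico_consecutive f (Nat.zero_le ω) hωN, range_eq_Ico]
  have hRHS : ∏ i ∈ range N, (1 + t i / lam i) = μ ^ ω / ∏ i ∈ range ω, lam i := by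
    rw [hsplit_prod]
    have h2 : ∏ i ∈ Ico ω N, (1 + t i / lam i) = 1 :=
      Finset.prod_eq_one fun i hi => by
        rw [ht0 i (mem_Ico.mp hi).1 (mem_Ico.mp hi).2, zero_div, add_zero]
    have h1 : ∏ i ∈ range ω, (1 + t i / lam i) = ∏ i ∈ range ω, (μ / lam i) := by
      apply Finset.prod_congr rfl
      intro i hi
      have hiN : i < N := by have := mem_range.mp hi; omega
      have := hpos i hiN
      rw [htval i (mem_range.mp hi)]
      field_simp
      ring
    rw [h1, h2, mul_one, Finset.prod_div_distrib, Finset.prod_const, card_range]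
  have hlamN : (0:ℝ) < ∏ i ∈ range N, lam i := Finset.prod_pos hlampos
  have hlamω : (0:ℝ) < ∏ i ∈ range ω, lam i :=
    Finset.prod_pos fun i hi => hpos i (by have := mem_range.mp hi; omega)
  have hLHS : ∏ i ∈ range N, (1 + s i / lam i)
      = (∏ i ∈ range N, (lam i + s i)) / ∏ i ∈ range N, lam i := by
    rw [← Finset.prod_div_distrib]
    apply Finset.prod_congr rfl
    intro i hi
    have := hlampos i hi
    field_simp
  rw [hRHS, hLHS]
  have hNω : ((N - ω : ℕ) : ℝ) = (N:ℝ) - (ω:ℝ) := by rw [Nat.cast_sub hωN]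
  have hkey : ∏ i ∈ range N, (lam i + s i) ≤ μ ^ ω * ∏ i ∈ Ico ω N, lam i := by
    set z : ℕ → ℝ := fun i => if i < ω then lam i + s i else μ + s i with hzdef
    have hz : ∀ i ∈ range N, 0 ≤ z i := by
      intro i hi
      have hiN := mem_range.mp hi
      have hsi := hs i hiN
      simp only [hzdef]
      split
      · have := hpos i hiN; linarith
      · linarith
    have hzsum : ∑ i ∈ range N, z i ≤ N * μ := by
      rw [hsplit_sum]
      have h1 : ∑ i ∈ range ω, z i = S + ∑ i ∈ range ω, s i := by
        rw [← Finset.sum_add_distrib]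
        exact Finset.sum_congr rfl fun i hi => if_pos (mem_range.mp hi)
      have h2 : ∑ i ∈ Ico ω N, z i = ((N - ω : ℕ):ℝ) * μ + ∑ i ∈ Ico ω N, s i := by
        rw [Finset.sum_congr rfl (fun i hi => if_neg (by
          have := mem_Ico.mp hi; omega : ¬ i < ω)),
          Finset.sum_add_distrib, Finset.sum_const, Nat.card_Ico, nsmul_eq_mul]
      have h3 : (∑ i ∈ range ω, s i) + ∑ i ∈ Ico ω N, s i = T := by
        rw [← hsplit_sum]; exact hssum
      rw [h1, h2, hNω]
      nlinarith [hωμ]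
    have hAM := amgm_aux N (by omega) μ z hz hzsum
    have hzprod : ∏ i ∈ range N, z i
        = (∏ i ∈ range ω, (lam i + s i)) * ∏ i ∈ Ico ω N, (μ + s i) := by
      rw [hsplit_prod]
      congr 1
      · exact Finset.prod_congr rfl fun i hi => if_pos (mem_range.mp hi)
      · exact Finset.prod_congr rfl fun i hi => if_neg (by
          have := mem_Ico.mp hi; omega : ¬ i < ω)
    rw [hzprod] at hAM
    have hApos : 0 ≤ ∏ i ∈ range ω, (lam i + s i) :=
      Finset.prod_nonneg fun i hi => by
        have hiN : i < N := by have := mem_range.mp hi; omega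
        have := hpos i hiN; have := hs i hiN; linarith
    have hstep : ∏ i ∈ Ico ω N, (lam i + s i)
        ≤ ∏ i ∈ Ico ω N, ((lam i / μ) * (μ + s i)) := by
      apply Finset.prod_le_prod
      · intro i hi
        have := mem_Ico.mp hi
        have := hpos i this.2; have := hs i (mem_Ico.mp hi).2; linarith
      · intro i hi
        obtain ⟨h1', h2'⟩ := mem_Ico.mp hi
        have hl := hpos i h2'
        have hμl := htail i h1' h2'
        have hsi := hs i h2'
        have hexp : (lam i / μ) * (μ + s i) = lam i + (lam i * s i) / μ := by
          field_simp
        rw [hexp]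
        have : s i ≤ (lam i * s i) / μ := by
          rw [le_div_iff₀ hμpos]; nlinarith
        linarith
    have hmul : ∏ i ∈ Ico ω N, ((lam i / μ) * (μ + s i))
        = ((∏ i ∈ Ico ω N, lam i) / μ ^ (N - ω)) * ∏ i ∈ Ico ω N, (μ + s i) := by
      rw [Finset.prod_mul_distrib, Finset.prod_div_distrib, Finset.prod_const, Nat.card_Ico]
    have hIcopos : (0:ℝ) < ∏ i ∈ Ico ω N, lam i :=
      Finset.prod_pos fun i hi => hpos i (mem_Ico.mp hi).2
    have hμspos : 0 ≤ ∏ i ∈ Ico ω N, (μ + s i) :=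
      Finset.prod_nonneg fun i hi => by have := hs i (mem_Ico.mp hi).2; linarith
    calc ∏ i ∈ range N, (lam i + s i)
        = (∏ i ∈ range ω, (lam i + s i)) * ∏ i ∈ Ico ω N, (lam i + s i) :=
          hsplit_prod _
      _ ≤ (∏ i ∈ range ω, (lam i + s i)) *
          (((∏ i ∈ Ico ω N, lam i) / μ ^ (N - ω)) * ∏ i ∈ Ico ω N, (μ + s i)) := by
          apply mul_le_mul_of_nonneg_left _ hApos
          rw [← hmul]; exact hstep
      _ = ((∏ i ∈ Ico ω N, lam i) / μ ^ (N - ω)) *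
          ((∏ i ∈ range ω, (lam i + s i)) * ∏ i ∈ Ico ω N, (μ + s i)) := by ring
      _ ≤ ((∏ i ∈ Ico ω N, lam i) / μ ^ (N - ω)) * μ ^ N := by
          apply mul_le_mul_of_nonneg_left hAM
          positivity
      _ = μ ^ ω * ∏ i ∈ Ico ω N, lam i := by
          have : μ ^ N = μ ^ ω * μ ^ (N - ω) := by
            rw [← pow_add]; congr 1; omega
          rw [this]
          field_simp
  rw [div_le_div_iff₀ hlamN hlamω]
  calc (∏ i ∈ range N, (lam i + s i)) * ∏ i ∈ range ω, lam i
      ≤ (μ ^ ω * ∏ i ∈ Ico ω N, lam i) * ∏ i ∈ range ω, lam i := by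
        apply mul_le_mul_of_nonneg_right hkey (le_of_lt hlamω)
    _ = μ ^ ω * ∏ i ∈ range N, lam i := by rw [hsplit_prod lam]; ring
end

section
/- Let Λ be a symmetric positive definite N×N real matrix and let x_1,…,x_{t−1} ∈ ℝ^N. Define V_s = Λ + ∑_{u=1}^{s−1} x_u x_uᵀ for each s. Then log(det V_t / det Λ) = ∑_{s=1}^{t−1} log(1 + x_sᵀ V_s⁻¹ x_s). -/
open Matrix Finset

lemma vecMulVec_posSemidef {N : ℕ} (x : Fin N → ℝ) :
    (vecMulVec x x).PosSemidef := by
  rw [posSemidef_iff_dotProduct_mulVec]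
  constructor
  · ext i j
    simp [vecMulVec_apply, IsHermitian, conjTranspose, mul_comm]
  · intro y
    have : y ⬝ᵥ (vecMulVec x x) *ᵥ y = (x ⬝ᵥ y) * (x ⬝ᵥ y) := by
      simp [dotProduct, mulVec, vecMulVec_apply, Finset.sum_mul, Finset.mul_sum]
      ring_nf
      congr 1; ext i
      congr 1; ext j
      ring
    simpa [this] using mul_self_nonneg (x ⬝ᵥ y)

/-- With `V_s = Λ + ∑_{u<s} x_u x_uᵀ` for a symmetric positive definite `Λ`
(here 0-indexed: `V s` corresponds to the paper's `V_{s+1}`),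
`log(det V_t / det Λ) = ∑_{s<t} log(1 + x_sᵀ V_s⁻¹ x_s)`. -/
theorem stmt_4 (N t : ℕ) (Λ : Matrix (Fin N) (Fin N) ℝ) (hΛ : Λ.PosDef)
    (x : ℕ → Fin N → ℝ)
    (V : ℕ → Matrix (Fin N) (Fin N) ℝ)
    (hV : ∀ s, V s = Λ + ∑ u ∈ Finset.range s, vecMulVec (x u) (x u)) :
    Real.log ((V t).det / Λ.det) =
      ∑ s ∈ Finset.range t, Real.log (1 + x s ⬝ᵥ (V s)⁻¹ *ᵥ x s) := by
  have hVpos : ∀ s, (V s).PosDef := by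
    intro s
    rw [hV s]
    refine hΛ.add_posSemidef ?_
    refine Finset.sum_induction _ _ (fun a b ha hb => ha.add hb) ?_
      (fun u _ => vecMulVec_posSemidef (x u))
    exact Matrix.PosSemidef.zero
  have hterm : ∀ s, 0 < 1 + x s ⬝ᵥ (V s)⁻¹ *ᵥ x s := by
    intro s
    rcases eq_or_ne (x s) 0 with h | h
    · simp [h]
    · have := (hVpos s).inv.dotProduct_mulVec_pos h
      rw [star_trivial] at this
      linarith
  have hdet : ∀ s, (V (s+1)).det = (V s).det * (1 + x s ⬝ᵥ (V s)⁻¹ *ᵥ x s) := by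
    intro s
    have h1 : V (s+1) = V s + vecMulVec (x s) (x s) := by
      rw [hV (s+1), hV s, Finset.sum_range_succ, add_assoc]
    rw [h1, vecMulVec_eq (Fin 1),
      det_add_replicateCol_mul_replicateRow (isUnit_iff_ne_zero.mpr (hVpos s).det_pos.ne') (x s) (x s)]
    congr 1
    have hsym := ((hVpos s).inv).1
    have hd := det_fin_one (1 + replicateRow (Fin 1) (x s) * (V s)⁻¹ * replicateCol (Fin 1) (x s))
    refine hd.trans ?_
    simp only [Matrix.add_apply, Matrix.one_apply_eq, Matrix.mul_apply, Matrix.replicateRow_apply,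
      Matrix.replicateCol_apply, mulVec, dotProduct, Finset.univ_unique, Finset.sum_const,
      Finset.card_singleton, one_smul]
    congr 1
    simp only [Finset.sum_mul, Finset.mul_sum]
    rw [Finset.sum_comm]
    refine Finset.sum_congr rfl fun i _ => Finset.sum_congr rfl fun j _ => ?_
    have h2 := hsym.apply i j
    rw [star_trivial] at h2
    ring
  induction t with
  | zero => simp [hV 0, div_self hΛ.det_pos.ne']
  | succ n ih =>
    rw [Finset.sum_range_succ, ← ih, hdet n, mul_div_right_comm,
      Real.log_mul (div_ne_zero (hVpos n).det_pos.ne' hΛ.det_pos.ne') (hterm n).ne']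
end

section
/- Let Λ be a symmetric positive definite N×N real matrix, let x_1,…,x_t ∈ ℝ^N, and define V_s = Λ + ∑_{u=1}^{s−1} x_u x_uᵀ. Then ∑_{s=1}^{t} min(1, x_sᵀ V_s⁻¹ x_s) ≤ 2 · log(det V_{t+1} / det Λ). -/
open Matrix Finset

lemma aux_min_le_two_log {u : ℝ} (hu : 0 ≤ u) : min 1 u ≤ 2 * Real.log (1 + u) := by
  rcases le_total u 1 with h | h
  · rw [min_eq_right h]
    have h1 : (0:ℝ) < 1 + u := by linarith
    have hlog : 1 - (1 + u)⁻¹ ≤ Real.log (1 + u) := by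
      have := Real.log_le_sub_one_of_pos (x := (1+u)⁻¹) (by positivity)
      rw [Real.log_inv] at this
      linarith
    have : u / (1 + u) ≤ Real.log (1 + u) := by
      have : 1 - (1+u)⁻¹ = u / (1+u) := by field_simp; ring
      linarith [hlog, this.symm.le, this.le]
    have h2 : u / 2 ≤ u / (1 + u) := by
      apply div_le_div_of_nonneg_left hu h1 (by linarith)
    linarith
  · rw [min_eq_left h]
    have : Real.log 2 ≤ Real.log (1 + u) := by
      apply Real.log_le_log (by norm_num); linarith
    have := Real.log_two_gt_d9
    linarith

lemma aux_vecMulVec_psd {N : ℕ} (v : Fin N → ℝ) : (vecMulVec v v).PosSemidef := by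
  have h : vecMulVec v v = (replicateRow Unit v)ᴴ * replicateRow Unit v := by
    rw [conjTranspose_replicateRow, star_trivial, ← vecMulVec_eq Unit]
  rw [h]
  exact posSemidef_conjTranspose_mul_self _

/-- With `V_s = Λ + ∑_{u<s} x_u x_uᵀ` for symmetric positive definite `Λ`
(0-indexed: `V s` is the paper's `V_{s+1}`),
`∑_{s<t} min(1, x_sᵀ V_s⁻¹ x_s) ≤ 2 log(det V_t / det Λ)` (the paper's `V_{t+1}`). -/
theorem stmt_7 (N t : ℕ) (Λ : Matrix (Fin N) (Fin N) ℝ) (hΛ : Λ.PosDef)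
    (x : ℕ → Fin N → ℝ)
    (V : ℕ → Matrix (Fin N) (Fin N) ℝ)
    (hV : ∀ s, V s = Λ + ∑ u ∈ Finset.range s, vecMulVec (x u) (x u)) :
    ∑ s ∈ Finset.range t, min 1 (x s ⬝ᵥ (V s)⁻¹ *ᵥ x s) ≤
      2 * Real.log ((V t).det / Λ.det) := by
  -- positivity of V s
  have hVpos : ∀ s, (V s).PosDef := by
    intro s
    rw [hV s]
    refine hΛ.add_posSemidef ?_
    exact Finset.sum_induction _ _ (fun a b ha hb => ha.add hb) Matrix.PosSemidef.zero
      (fun u _ => aux_vecMulVec_psd (x u))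
  have hdetpos : ∀ s, 0 < (V s).det := fun s => (hVpos s).det_pos
  set u : ℕ → ℝ := fun s => x s ⬝ᵥ (V s)⁻¹ *ᵥ x s with hu
  have hunn : ∀ s, 0 ≤ u s := by
    intro s
    have := ((hVpos s).inv).posSemidef.dotProduct_mulVec_nonneg (x s)
    simpa using this
  -- determinant identity
  have hdet : ∀ s, (V (s+1)).det = (V s).det * (1 + u s) := by
    intro s
    have hstep : V (s+1) = V s + replicateCol Unit (x s) * replicateRow Unit (x s) := by
      rw [hV (s+1), hV s, Finset.sum_range_succ, ← add_assoc, ← vecMulVec_eq Unit]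
    rw [hstep, Matrix.det_add_replicateCol_mul_replicateRow (isUnit_iff_ne_zero.mpr (hdetpos s).ne')]
    congr 1
    rw [det_unique]
    simp only [Matrix.add_apply, Matrix.one_apply_eq]
    congr 1
    rw [← Matrix.replicateRow_vecMul, Matrix.replicateRow_mul_replicateCol_apply]
    rw [hu]
    exact (Matrix.dotProduct_mulVec _ _ _).symm
  have hlogstep : ∀ s, Real.log (V (s+1)).det - Real.log (V s).det = Real.log (1 + u s) := by
    intro s
    rw [hdet s, Real.log_mul (hdetpos s).ne' (by nlinarith [hunn s])]
    ring
  calc ∑ s ∈ Finset.range t, min 1 (u s)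
      ≤ ∑ s ∈ Finset.range t, 2 * Real.log (1 + u s) := by
        apply Finset.sum_le_sum
        intro s _
        exact aux_min_le_two_log (hunn s)
    _ = 2 * ∑ s ∈ Finset.range t, (Real.log (V (s+1)).det - Real.log (V s).det) := by
        rw [Finset.mul_sum]
        exact Finset.sum_congr rfl fun s _ => by rw [hlogstep s]
    _ = 2 * (Real.log (V t).det - Real.log (V 0).det) := by
        rw [Finset.sum_range_sub (fun s => Real.log (V s).det)]
    _ = 2 * Real.log ((V t).det / Λ.det) := by
        have h0 : V 0 = Λ := by rw [hV 0]; simp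
        rw [h0, Real.log_div (hdetpos t).ne' hΛ.det_pos.ne']
end

section
/- Let Λ = diag(λ_1,…,λ_N) be diagonal with entries 0 < λ = λ_1 ≤ … ≤ λ_N, let K ≥ 1 be an integer, let T ≥ 1, and let d = ⌈ (max_{t_1,…,t_N ≥ 0, ∑ t_i = T} ∑_{i=1}^N log(1 + t_i/λ_i)) / log(1 + T/(Kλ)) ⌉ be the effective dimension. Then for any vectors x_1,…,x_{t−1} ∈ ℝ^N with ‖x_s‖₂ ≤ 1 and any t ≤ T + 1, the matrix V_t = Λ + ∑_{s=1}^{t−1} x_s x_sᵀ satisfies log(det V_t / det Λ) ≤ d · log(1 + T/(Kλ)). -/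
open Matrix Finset

section aux

lemma trace_eq_sum_eig {n : Type*} [Fintype n] [DecidableEq n] {M : Matrix n n ℝ}
    (hM : M.IsHermitian) : M.trace = ∑ i, hM.eigenvalues i := by
  rw [hM.trace_eq_sum_eigenvalues]
  simp

lemma hadamard_det_le {n : Type*} [Fintype n] [DecidableEq n] {M : Matrix n n ℝ}
    (hM : M.PosSemidef) (hdiag : ∀ i, 0 < M i i) : M.det ≤ ∏ i, M i i := by
  set d : n → ℝ := fun i => (Real.sqrt (M i i))⁻¹ with hdd
  have hd0 : ∀ i, 0 < d i := fun i => inv_pos.2 (Real.sqrt_pos.2 (hdiag i))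
  set D : Matrix n n ℝ := Matrix.diagonal d with hD
  have hDsym : Dᴴ = D := by
    simp [hD, Matrix.diagonal_conjTranspose]
  have hW : (D * M * Dᴴ).PosSemidef := hM.mul_mul_conjTranspose_same D
  set W : Matrix n n ℝ := D * M * Dᴴ with hWdef
  have hWdiag : ∀ i, W i i = 1 := by
    intro i
    have : W i i = d i * M i i * d i := by
      simp [hWdef, hD, Matrix.mul_apply, Matrix.diagonal, Matrix.conjTranspose_apply,
        Finset.sum_ite_eq, Finset.sum_ite_eq']
    rw [this, hdd]
    have h2 : (Real.sqrt (M i i))⁻¹ * M i i * (Real.sqrt (M i i))⁻¹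
        = M i i / (Real.sqrt (M i i) * Real.sqrt (M i i)) := by ring
    rw [h2, Real.mul_self_sqrt (hdiag i).le, div_self (hdiag i).ne']
  have hH := hW.isHermitian
  have hμ0 : ∀ i, 0 ≤ hH.eigenvalues i := hW.eigenvalues_nonneg
  have htr : ∑ i, hH.eigenvalues i = (Fintype.card n : ℝ) := by
    rw [← trace_eq_sum_eig hH, Matrix.trace]
    simp [Matrix.diag, hWdiag]
  have hdetW : W.det = ∏ i, hH.eigenvalues i := by
    have := hH.det_eq_prod_eigenvalues
    simpa using this
  have hle1 : W.det ≤ 1 := by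
    rw [hdetW]
    calc ∏ i, hH.eigenvalues i ≤ ∏ i, Real.exp (hH.eigenvalues i - 1) :=
          Finset.prod_le_prod (fun i _ => hμ0 i)
            (fun i _ => by linarith [Real.add_one_le_exp (hH.eigenvalues i - 1)])
      _ = Real.exp (∑ i, (hH.eigenvalues i - 1)) := by rw [Real.exp_sum]
      _ = 1 := by rw [Finset.sum_sub_distrib, htr]; simp
  have hdetW2 : W.det = (∏ i, d i)^2 * M.det := by
    rw [hWdef, Matrix.det_mul, Matrix.det_mul, hDsym, hD, Matrix.det_diagonal]
    ring
  have key : (∏ i, d i)^2 * ∏ i, M i i = 1 := by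
    rw [← Finset.prod_pow, ← Finset.prod_mul_distrib]
    apply Finset.prod_eq_one
    intro i _
    rw [hdd, inv_pow, Real.sq_sqrt (hdiag i).le, inv_mul_cancel₀ (hdiag i).ne']
  have hP : 0 < ∏ i, M i i := Finset.prod_pos (fun i _ => hdiag i)
  have hMd : M.det = W.det * ∏ i, M i i := by
    rw [hdetW2]; linear_combination (-(M.det)) * key
  rw [hMd]
  calc W.det * ∏ i, M i i ≤ 1 * ∏ i, M i i := mul_le_mul_of_nonneg_right hle1 hP.le
    _ = ∏ i, M i i := one_mul _
end aux

/-- If `d` is the effective dimension for eigenvalues `0 < λ = λ_1 ≤ … ≤ λ_N`,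
horizon `T ≥ 1`, and integer `K ≥ 1`, then for any `t ≤ T + 1` and vectors
`x_1, …, x_{t−1}` (indexed here by `Fin m` with `m = t − 1 ≤ T`) in the unit ball,
`V_t = Λ + ∑ x_s x_sᵀ` satisfies `log(det V_t / det Λ) ≤ d · log(1 + T/(Kλ))`. -/
theorem stmt_11 (N K : ℕ) (hN : 1 ≤ N) (hK : 1 ≤ K)
    (lam : Fin N → ℝ) (lambda : ℝ) (hlambda : 0 < lambda)
    (hfirst : lam ⟨0, hN⟩ = lambda) (hmono : Monotone lam)
    (T : ℝ) (hT : 1 ≤ T)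
    (d : ℤ)
    (hd : d = ⌈(sSup {y : ℝ | ∃ t : Fin N → ℝ, (∀ i, 0 ≤ t i) ∧ (∑ i, t i = T) ∧
        y = ∑ i, Real.log (1 + t i / lam i)}) / Real.log (1 + T / (K * lambda))⌉)
    (m : ℕ) (hm : (m : ℝ) ≤ T)
    (x : Fin m → Fin N → ℝ) (hx : ∀ s, Real.sqrt (x s ⬝ᵥ x s) ≤ 1) :
    Real.log ((Matrix.diagonal lam + ∑ s, vecMulVec (x s) (x s)).det /
        (Matrix.diagonal lam).det) ≤
      (d : ℝ) * Real.log (1 + T / (K * lambda)) := by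
  have hlam : ∀ i, 0 < lam i := by
    intro i
    have : lam ⟨0, hN⟩ ≤ lam i := hmono (by simp [Fin.le_def])
    rw [hfirst] at this
    linarith
  set S : Matrix (Fin N) (Fin N) ℝ := ∑ s, vecMulVec (x s) (x s) with hSdef
  have hxx : ∀ s, (vecMulVec (x s) (x s)).PosSemidef := by
    intro s
    have h1 : vecMulVec (x s) (x s) = (Matrix.replicateRow Unit (x s))ᴴ * (Matrix.replicateRow Unit (x s)) := by
      rw [Matrix.conjTranspose_replicateRow, Matrix.vecMulVec_eq (ι := Unit)]
      simp
    rw [h1]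
    exact Matrix.posSemidef_conjTranspose_mul_self _
  have hS : S.PosSemidef := by
    rw [hSdef]
    induction (Finset.univ : Finset (Fin m)) using Finset.induction with
    | empty => simpa using Matrix.PosSemidef.zero
    | insert _ _ hnot ih =>
        rw [Finset.sum_insert hnot]
        exact (hxx _).add ih
  have hSdiag : ∀ i, S i i = ∑ s, (x s i)^2 := by
    intro i
    rw [hSdef, Matrix.sum_apply]
    exact Finset.sum_congr rfl fun s _ => by simp [Matrix.vecMulVec_apply]; ring
  have hS0 : ∀ i, 0 ≤ S i i := fun i => by
    rw [hSdiag]; exact Finset.sum_nonneg fun s _ => sq_nonneg _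
  set V : Matrix (Fin N) (Fin N) ℝ := Matrix.diagonal lam + S with hVdef
  have hVpd : V.PosDef := (Matrix.posDef_diagonal_iff.mpr hlam).add_posSemidef hS
  have hVdiag : ∀ i, V i i = lam i + S i i := by
    intro i; rw [hVdef]; simp [Matrix.diagonal_apply_eq]
  have hVdpos : ∀ i, 0 < V i i := fun i => by
    rw [hVdiag]; exact add_pos_of_pos_of_nonneg (hlam i) (hS0 i)
  have hdetL : (Matrix.diagonal lam).det = ∏ i, lam i := Matrix.det_diagonal
  have hdetLpos : 0 < (Matrix.diagonal lam).det := by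
    rw [hdetL]; exact Finset.prod_pos fun i _ => hlam i
  have hdetVpos : 0 < V.det := hVpd.det_pos
  -- Hadamard
  have hHad : V.det ≤ ∏ i, (lam i + S i i) := by
    calc V.det ≤ ∏ i, V i i := hadamard_det_le hVpd.posSemidef hVdpos
      _ = ∏ i, (lam i + S i i) := Finset.prod_congr rfl fun i _ => hVdiag i
  -- sum of diagonal of S
  have hSig : ∑ i, S i i ≤ T := by
    have h1 : ∑ i, S i i = ∑ s, (x s ⬝ᵥ x s) := by
      simp only [hSdiag]
      rw [Finset.sum_comm]
      exact Finset.sum_congr rfl fun s _ => by simp [dotProduct, sq]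
    have h2 : ∀ s, x s ⬝ᵥ x s ≤ 1 := by
      intro s
      have h0 : 0 ≤ x s ⬝ᵥ x s := Finset.sum_nonneg fun i _ => mul_self_nonneg _
      have := hx s
      nlinarith [Real.sq_sqrt h0, Real.sqrt_nonneg (x s ⬝ᵥ x s)]
    calc ∑ i, S i i = ∑ s, (x s ⬝ᵥ x s) := h1
      _ ≤ ∑ _s : Fin m, (1:ℝ) := Finset.sum_le_sum fun s _ => h2 s
      _ = m := by simp
      _ ≤ T := hm
  -- the witness t
  set i0 : Fin N := ⟨0, hN⟩ with hi0
  set t : Fin N → ℝ := fun i => S i i + (if i = i0 then T - ∑ j, S j j else 0) with ht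
  have htapp : ∀ i, t i = S i i + (if i = i0 then T - ∑ j, S j j else 0) := fun i => rfl
  have ht0 : ∀ i, 0 ≤ t i := by
    intro i
    rw [htapp i]
    rcases eq_or_ne i i0 with h | h
    · rw [if_pos h]
      have := hS0 i
      linarith
    · rw [if_neg h, add_zero]
      exact hS0 i
  have htsum : ∑ i, t i = T := by
    rw [ht]
    rw [Finset.sum_add_distrib, Finset.sum_ite_eq' Finset.univ i0 (fun _ => T - ∑ j, S j j)]
    simp
  have htge : ∀ i, S i i ≤ t i := by
    intro i
    rw [htapp i]
    rcases eq_or_ne i i0 with h | h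
    · rw [if_pos h]
      linarith
    · rw [if_neg h, add_zero]
  set E : Set ℝ := {y : ℝ | ∃ t : Fin N → ℝ, (∀ i, 0 ≤ t i) ∧ (∑ i, t i = T) ∧
        y = ∑ i, Real.log (1 + t i / lam i)} with hE
  have hbdd : BddAbove E := by
    refine ⟨N * Real.log (1 + T / lambda), ?_⟩
    rintro y ⟨t', ht'0, ht'sum, rfl⟩
    calc ∑ i, Real.log (1 + t' i / lam i) ≤ ∑ _i : Fin N, Real.log (1 + T / lambda) := by
          apply Finset.sum_le_sum
          intro i _
          apply Real.log_le_log
          · have := ht'0 i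
            have := hlam i
            positivity
          have hti : t' i ≤ T := by
            rw [← ht'sum]
            exact Finset.single_le_sum (fun j _ => ht'0 j) (Finset.mem_univ i)
          have hli : lambda ≤ lam i := by
            rw [← hfirst]; exact hmono (Fin.le_def.mpr (Nat.zero_le _))
          have : t' i / lam i ≤ T / lambda :=
            div_le_div₀ (by linarith) hti hlambda hli
          linarith
      _ = N * Real.log (1 + T / lambda) := by simp [mul_comm]
  have hmem : (∑ i, Real.log (1 + t i / lam i)) ∈ E :=
    ⟨t, ht0, htsum, rfl⟩
  -- positivity of L
  have hKpos : (1:ℝ) ≤ (K:ℝ) := by exact_mod_cast hK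
  have hL : 0 < Real.log (1 + T / (K * lambda)) := by
    apply Real.log_pos
    have : 0 < T / (K * lambda) := by positivity
    linarith
  -- main chain
  have hquot : ∏ i, (1 + S i i / lam i) = (∏ i, (lam i + S i i)) / ∏ i, lam i := by
    rw [← Finset.prod_div_distrib]
    refine Finset.prod_congr rfl fun i _ => ?_
    rw [add_div, div_self (hlam i).ne']
  have hprodpos : 0 < ∏ i, (1 + S i i / lam i) := by
    apply Finset.prod_pos
    intro i _
    have := hS0 i
    have := hlam i
    positivity
  have step1 : Real.log (V.det / (Matrix.diagonal lam).det)
      ≤ ∑ i, Real.log (1 + S i i / lam i) := by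
    have hprod : V.det / (Matrix.diagonal lam).det ≤ ∏ i, (1 + S i i / lam i) := by
      rw [hquot, hdetL]
      exact (div_le_div_iff_of_pos_right (by rw [← hdetL]; exact hdetLpos)).mpr hHad
    calc Real.log (V.det / (Matrix.diagonal lam).det)
        ≤ Real.log (∏ i, (1 + S i i / lam i)) :=
          Real.log_le_log (div_pos hdetVpos hdetLpos) hprod
      _ = ∑ i, Real.log (1 + S i i / lam i) := by
          rw [Real.log_prod]
          intro i _
          have := hS0 i
          have := hlam i
          positivity
  have step2 : ∑ i, Real.log (1 + S i i / lam i) ≤ ∑ i, Real.log (1 + t i / lam i) := by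
    apply Finset.sum_le_sum
    intro i _
    apply Real.log_le_log
    · have := hS0 i
      have := hlam i
      positivity
    · have : S i i / lam i ≤ t i / lam i :=
        (div_le_div_iff_of_pos_right (hlam i)).mpr (htge i)
      linarith
  have step3 : ∑ i, Real.log (1 + t i / lam i) ≤ sSup E := le_csSup hbdd hmem
  have step4 : sSup E ≤ (d : ℝ) * Real.log (1 + T / (K * lambda)) := by
    rw [hd]
    have h1 : sSup E / Real.log (1 + T / (K * lambda))
        ≤ (⌈sSup E / Real.log (1 + T / (K * lambda))⌉ : ℝ) := Int.le_ceil _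
    rw [div_le_iff₀ hL] at h1
    exact_mod_cast h1
  calc Real.log (V.det / (Matrix.diagonal lam).det)
      ≤ ∑ i, Real.log (1 + S i i / lam i) := step1
    _ ≤ ∑ i, Real.log (1 + t i / lam i) := step2
    _ ≤ sSup E := step3
    _ ≤ (d : ℝ) * Real.log (1 + T / (K * lambda)) := step4
end

section
/- Let Λ be a symmetric positive definite N×N real matrix, let α ∈ ℝ^N, let x_1,…,x_{t−1} ∈ ℝ^N, and let ε_1,…,ε_{t−1} be real numbers. Set V = Λ + ∑_{s=1}^{t−1} x_s x_sᵀ, r_s = x_sᵀ α + ε_s, ξ = ∑_{s=1}^{t−1} ε_s x_s, and let α̂ = V⁻¹ ∑_{s=1}^{t−1} x_s r_s be the regularized least-squares estimate. Then for every x ∈ ℝ^N, |xᵀ α̂ − xᵀ α| ≤ ‖x‖_{V⁻¹} · (‖ξ‖_{V⁻¹} + ‖α‖_Λ). -/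
open Matrix Finset

lemma sym_dot {N : ℕ} {M : Matrix (Fin N) (Fin N) ℝ} (hM : M.IsHermitian)
    (u v : Fin N → ℝ) : u ⬝ᵥ M *ᵥ v = v ⬝ᵥ M *ᵥ u := by
  have hsym : ∀ i j, M i j = M j i := by
    intro i j
    have := congrFun (congrFun hM j) i
    simpa [Matrix.conjTranspose_apply] using this
  simp only [dotProduct, mulVec, Finset.mul_sum]
  rw [Finset.sum_comm]
  refine Finset.sum_congr rfl fun i _ => Finset.sum_congr rfl fun j _ => ?_
  rw [hsym j i]; ring

lemma dot_shift {N : ℕ} {M : Matrix (Fin N) (Fin N) ℝ} (hM : M.IsHermitian)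
    (u v : Fin N → ℝ) : u ⬝ᵥ M *ᵥ v = (M *ᵥ u) ⬝ᵥ v :=
  (sym_dot hM u v).trans (dotProduct_comm _ _)

lemma sum_mulVec' {N m : ℕ} (A : Fin m → Matrix (Fin N) (Fin N) ℝ) (u : Fin N → ℝ) :
    (∑ s, A s) *ᵥ u = ∑ s, A s *ᵥ u := by
  ext i
  simp only [mulVec, dotProduct, Matrix.sum_apply, Finset.sum_apply, Finset.sum_mul]
  exact Finset.sum_comm

lemma vecMulVec_mulVec' {N : ℕ} (w u : Fin N → ℝ) :
    vecMulVec w w *ᵥ u = (w ⬝ᵥ u) • w := by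
  ext i
  simp only [vecMulVec, mulVec, dotProduct, Matrix.of_apply, Pi.smul_apply, smul_eq_mul,
    Finset.sum_mul]
  exact Finset.sum_congr rfl fun j _ => by ring

lemma dot_sum {N m : ℕ} (u : Fin N → ℝ) (v : Fin m → Fin N → ℝ) :
    u ⬝ᵥ ∑ s, v s = ∑ s, u ⬝ᵥ v s := by
  simp only [dotProduct, Finset.sum_apply, Finset.mul_sum]
  exact Finset.sum_comm

lemma cs_psd {N : ℕ} {M : Matrix (Fin N) (Fin N) ℝ} (hM : M.PosSemidef)
    (u v : Fin N → ℝ) :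
    |u ⬝ᵥ M *ᵥ v| ≤ Real.sqrt (u ⬝ᵥ M *ᵥ u) * Real.sqrt (v ⬝ᵥ M *ᵥ v) := by
  have hdisc : discrim (v ⬝ᵥ M *ᵥ v) (2 * (u ⬝ᵥ M *ᵥ v)) (u ⬝ᵥ M *ᵥ u) ≤ 0 := by
    apply discrim_le_zero
    intro t
    have h0 := hM.dotProduct_mulVec_nonneg (u + t • v)
    have hvu : v ⬝ᵥ M *ᵥ u = u ⬝ᵥ M *ᵥ v := sym_dot hM.1 v u
    simp only [star_trivial] at h0
    have hexp : (u + t • v) ⬝ᵥ M *ᵥ (u + t • v)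
        = v ⬝ᵥ M *ᵥ v * (t * t) + 2 * (u ⬝ᵥ M *ᵥ v) * t + u ⬝ᵥ M *ᵥ u := by
      rw [Matrix.mulVec_add, Matrix.mulVec_smul]
      simp only [dotProduct_add, add_dotProduct, smul_dotProduct, dotProduct_smul,
        smul_eq_mul, hvu]
      ring
    linarith [hexp ▸ h0]
  have hsq : (u ⬝ᵥ M *ᵥ v) ^ 2 ≤ (u ⬝ᵥ M *ᵥ u) * (v ⬝ᵥ M *ᵥ v) := by
    rw [discrim] at hdisc; nlinarith
  calc |u ⬝ᵥ M *ᵥ v| = Real.sqrt ((u ⬝ᵥ M *ᵥ v) ^ 2) := (Real.sqrt_sq_eq_abs _).symm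
    _ ≤ Real.sqrt ((u ⬝ᵥ M *ᵥ u) * (v ⬝ᵥ M *ᵥ v)) := Real.sqrt_le_sqrt hsq
    _ = Real.sqrt (u ⬝ᵥ M *ᵥ u) * Real.sqrt (v ⬝ᵥ M *ᵥ v) := Real.sqrt_mul (by simpa using hM.dotProduct_mulVec_nonneg u) _

lemma psd_outer_sum {N m : ℕ} (x : Fin m → Fin N → ℝ) :
    (∑ s, vecMulVec (x s) (x s)).PosSemidef := by
  rw [posSemidef_iff_dotProduct_mulVec]
  constructor
  · unfold Matrix.IsHermitian
    ext i j
    simp [vecMulVec, Matrix.conjTranspose_apply, Matrix.sum_apply, mul_comm]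
  · intro u
    rw [sum_mulVec', dot_sum]
    simp only [star_trivial]
    apply Finset.sum_nonneg
    intro s _
    rw [vecMulVec_mulVec', dotProduct_smul, smul_eq_mul, dotProduct_comm u (x s)]
    exact mul_self_nonneg _

/-- Confidence-ellipsoid decomposition for the regularized least-squares estimate:
`|xᵀα̂ − xᵀα| ≤ ‖x‖_{V⁻¹}(‖ξ‖_{V⁻¹} + ‖α‖_Λ)`, where `V = Λ + ∑ x_s x_sᵀ`,
`r_s = x_sᵀα + ε_s`, `ξ = ∑ ε_s x_s`, and `α̂ = V⁻¹ ∑ r_s x_s`. -/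
theorem stmt_12 (N m : ℕ) (Λ : Matrix (Fin N) (Fin N) ℝ) (hΛ : Λ.PosDef)
    (α : Fin N → ℝ) (x : Fin m → Fin N → ℝ) (ε : Fin m → ℝ)
    (V : Matrix (Fin N) (Fin N) ℝ)
    (hV : V = Λ + ∑ s, vecMulVec (x s) (x s))
    (r : Fin m → ℝ) (hr : ∀ s, r s = x s ⬝ᵥ α + ε s)
    (ξ : Fin N → ℝ) (hξ : ξ = ∑ s, ε s • x s)
    (αhat : Fin N → ℝ) (hαhat : αhat = V⁻¹ *ᵥ ∑ s, r s • x s)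
    (y : Fin N → ℝ) :
    |y ⬝ᵥ αhat - y ⬝ᵥ α| ≤
      Real.sqrt (y ⬝ᵥ V⁻¹ *ᵥ y) *
        (Real.sqrt (ξ ⬝ᵥ V⁻¹ *ᵥ ξ) + Real.sqrt (α ⬝ᵥ Λ *ᵥ α)) := by
  set S : Matrix (Fin N) (Fin N) ℝ := ∑ s, vecMulVec (x s) (x s) with hS
  have hSpsd : S.PosSemidef := psd_outer_sum x
  have hVpd : V.PosDef := hV ▸ hΛ.add_posSemidef hSpsd
  have hVinv : V⁻¹.PosDef := hVpd.inv
  have hVunit : IsUnit V.det := hVpd.det_pos.ne'.isUnit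
  have hsum : ∑ s, r s • x s = S *ᵥ α + ξ := by
    rw [hξ, hS, sum_mulVec', ← Finset.sum_add_distrib]
    refine Finset.sum_congr rfl fun s _ => ?_
    rw [vecMulVec_mulVec', hr s, add_smul]
  have hSV : S = V - Λ := by rw [hV]; abel
  have hinvV : V⁻¹ *ᵥ (V *ᵥ α) = α := by
    rw [Matrix.mulVec_mulVec, Matrix.nonsing_inv_mul _ hVunit, Matrix.one_mulVec]
  have hhat : αhat = α - V⁻¹ *ᵥ (Λ *ᵥ α) + V⁻¹ *ᵥ ξ := by
    rw [hαhat, hsum, hSV, Matrix.sub_mulVec, Matrix.mulVec_add, Matrix.mulVec_sub, hinvV]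
  have hdec : y ⬝ᵥ αhat - y ⬝ᵥ α = y ⬝ᵥ V⁻¹ *ᵥ ξ - y ⬝ᵥ V⁻¹ *ᵥ (Λ *ᵥ α) := by
    rw [hhat]
    simp only [dotProduct_add, dotProduct_sub]
    ring
  set w : Fin N → ℝ := Λ *ᵥ α with hw
  have hkey : Real.sqrt (w ⬝ᵥ V⁻¹ *ᵥ w) ≤ Real.sqrt (α ⬝ᵥ Λ *ᵥ α) := by
    set u : Fin N → ℝ := V⁻¹ *ᵥ w with hu
    have hc : w ⬝ᵥ V⁻¹ *ᵥ w = u ⬝ᵥ Λ *ᵥ α := by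
      rw [dot_shift hVinv.1 w w, ← hu, hw]
    have hVu : V *ᵥ u = w := by
      rw [hu, Matrix.mulVec_mulVec, Matrix.mul_nonsing_inv _ hVunit, Matrix.one_mulVec]
    have huv : u ⬝ᵥ V *ᵥ u = w ⬝ᵥ V⁻¹ *ᵥ w := by
      rw [hVu, dot_shift hVinv.1 w w, ← hu, dotProduct_comm]
    have hLam_le : u ⬝ᵥ Λ *ᵥ u ≤ u ⬝ᵥ V *ᵥ u := by
      have hS0 := hSpsd.dotProduct_mulVec_nonneg u
      simp only [star_trivial] at hS0
      have hVu2 : V *ᵥ u = Λ *ᵥ u + S *ᵥ u := by rw [hV, Matrix.add_mulVec]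
      rw [hVu2, dotProduct_add]
      linarith
    have hcs := cs_psd hΛ.posSemidef u α
    have h1 : w ⬝ᵥ V⁻¹ *ᵥ w ≤ Real.sqrt (u ⬝ᵥ Λ *ᵥ u) * Real.sqrt (α ⬝ᵥ Λ *ᵥ α) := by
      rw [hc]; exact (le_abs_self _).trans hcs
    have h2 : Real.sqrt (u ⬝ᵥ Λ *ᵥ u) ≤ Real.sqrt (u ⬝ᵥ V *ᵥ u) := Real.sqrt_le_sqrt hLam_le
    have hnn : 0 ≤ w ⬝ᵥ V⁻¹ *ᵥ w := by simpa using hVinv.posSemidef.dotProduct_mulVec_nonneg w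
    have h3 : w ⬝ᵥ V⁻¹ *ᵥ w ≤ Real.sqrt (w ⬝ᵥ V⁻¹ *ᵥ w) * Real.sqrt (α ⬝ᵥ Λ *ᵥ α) := by
      calc w ⬝ᵥ V⁻¹ *ᵥ w ≤ Real.sqrt (u ⬝ᵥ Λ *ᵥ u) * Real.sqrt (α ⬝ᵥ Λ *ᵥ α) := h1
        _ ≤ Real.sqrt (u ⬝ᵥ V *ᵥ u) * Real.sqrt (α ⬝ᵥ Λ *ᵥ α) :=
            mul_le_mul_of_nonneg_right h2 (Real.sqrt_nonneg _)
        _ = Real.sqrt (w ⬝ᵥ V⁻¹ *ᵥ w) * Real.sqrt (α ⬝ᵥ Λ *ᵥ α) := by rw [huv]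
    rcases eq_or_lt_of_le hnn with h0 | h0
    · rw [← h0]; simp [Real.sqrt_nonneg]
    · have hms : Real.sqrt (w ⬝ᵥ V⁻¹ *ᵥ w) * Real.sqrt (w ⬝ᵥ V⁻¹ *ᵥ w) = w ⬝ᵥ V⁻¹ *ᵥ w :=
        Real.mul_self_sqrt hnn
      have hs : 0 < Real.sqrt (w ⬝ᵥ V⁻¹ *ᵥ w) := Real.sqrt_pos.mpr h0
      nlinarith
  rw [hdec]
  have hbd1 := cs_psd hVinv.posSemidef y ξ
  have hbd2 := cs_psd hVinv.posSemidef y w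
  calc |y ⬝ᵥ V⁻¹ *ᵥ ξ - y ⬝ᵥ V⁻¹ *ᵥ w|
      ≤ |y ⬝ᵥ V⁻¹ *ᵥ ξ| + |y ⬝ᵥ V⁻¹ *ᵥ w| := abs_sub _ _
    _ ≤ Real.sqrt (y ⬝ᵥ V⁻¹ *ᵥ y) * Real.sqrt (ξ ⬝ᵥ V⁻¹ *ᵥ ξ)
        + Real.sqrt (y ⬝ᵥ V⁻¹ *ᵥ y) * Real.sqrt (w ⬝ᵥ V⁻¹ *ᵥ w) := add_le_add hbd1 hbd2
    _ ≤ Real.sqrt (y ⬝ᵥ V⁻¹ *ᵥ y) * Real.sqrt (ξ ⬝ᵥ V⁻¹ *ᵥ ξ)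
        + Real.sqrt (y ⬝ᵥ V⁻¹ *ᵥ y) * Real.sqrt (α ⬝ᵥ Λ *ᵥ α) :=
        add_le_add_right (mul_le_mul_of_nonneg_left hkey (Real.sqrt_nonneg _)) _
    _ = Real.sqrt (y ⬝ᵥ V⁻¹ *ᵥ y) *
        (Real.sqrt (ξ ⬝ᵥ V⁻¹ *ᵥ ξ) + Real.sqrt (α ⬝ᵥ Λ *ᵥ α)) := by ring
end

section
/- Let Λ be a symmetric positive definite N×N real matrix, let S be a symmetric positive semi-definite N×N real matrix, and set V = Λ + S. Then for all vectors x, α ∈ ℝ^N, |xᵀ V⁻¹ Λ α| ≤ ‖α‖_Λ · ‖x‖_{V⁻¹}, where ‖α‖_Λ = √(αᵀ Λ α) and ‖x‖_{V⁻¹} = √(xᵀ V⁻¹ x). -/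
open Matrix

lemma dot_cs (N : ℕ) (a b : Fin N → ℝ) :
    |a ⬝ᵥ b| ≤ Real.sqrt (a ⬝ᵥ a) * Real.sqrt (b ⬝ᵥ b) := by
  have h1 : a ⬝ᵥ a = ∑ i, a i ^ 2 := by simp [dotProduct, sq]
  have h2 : b ⬝ᵥ b = ∑ i, b i ^ 2 := by simp [dotProduct, sq]
  rw [h1, h2, abs_le]
  constructor
  · have := Real.sum_mul_le_sqrt_mul_sqrt Finset.univ a (fun i => -b i)
    simp only [mul_neg, neg_sq, Finset.sum_neg_distrib] at this
    have hd : a ⬝ᵥ b = ∑ i, a i * b i := rfl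
    linarith [this]
  · exact Real.sum_mul_le_sqrt_mul_sqrt Finset.univ a b

open scoped MatrixOrder in
lemma psd_cs (N : ℕ) (M : Matrix (Fin N) (Fin N) ℝ) (hM : M.PosSemidef)
    (u v : Fin N → ℝ) :
    |u ⬝ᵥ M *ᵥ v| ≤ Real.sqrt (u ⬝ᵥ M *ᵥ u) * Real.sqrt (v ⬝ᵥ M *ᵥ v) := by
  set B := CFC.sqrt M with hB
  have hBsym : Bᵀ = B := by
    have := (CFC.sqrt_nonneg M).posSemidef.1
    simpa [Matrix.IsHermitian, conjTranspose_eq_transpose_of_trivial] using this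
  have hBB : B * B = M := CFC.sqrt_mul_sqrt_self M hM.nonneg
  have key : ∀ w z : Fin N → ℝ, w ⬝ᵥ M *ᵥ z = (B *ᵥ w) ⬝ᵥ (B *ᵥ z) := by
    intro w z
    rw [← hBB, ← Matrix.mulVec_mulVec, Matrix.dotProduct_mulVec w B,
      ← Matrix.mulVec_transpose, hBsym]
  rw [key u v, key u u, key v v]
  exact dot_cs N _ _

/-- For symmetric positive definite `Λ`, positive semi-definite `S`, and `V = Λ + S`:
`|xᵀ V⁻¹ Λ α| ≤ ‖α‖_Λ ‖x‖_{V⁻¹}`. -/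
theorem stmt_13 (N : ℕ) (Λ S : Matrix (Fin N) (Fin N) ℝ)
    (hΛ : Λ.PosDef) (hS : S.PosSemidef)
    (V : Matrix (Fin N) (Fin N) ℝ) (hV : V = Λ + S)
    (x α : Fin N → ℝ) :
    |x ⬝ᵥ V⁻¹ *ᵥ (Λ *ᵥ α)| ≤
      Real.sqrt (α ⬝ᵥ Λ *ᵥ α) * Real.sqrt (x ⬝ᵥ V⁻¹ *ᵥ x) := by
  have hVpd : V.PosDef := by rw [hV]; exact hΛ.add_posSemidef hS
  have hVinv : V⁻¹.PosDef := hVpd.inv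
  have hVinvSym : (V⁻¹)ᵀ = V⁻¹ := by
    have := hVinv.1
    simpa [Matrix.IsHermitian, conjTranspose_eq_transpose_of_trivial] using this
  set y := V⁻¹ *ᵥ x with hy
  have hswap : ∀ w : Fin N → ℝ, x ⬝ᵥ V⁻¹ *ᵥ w = y ⬝ᵥ w := by
    intro w
    rw [Matrix.dotProduct_mulVec x V⁻¹, ← Matrix.mulVec_transpose, hVinvSym]
  have h1 : |x ⬝ᵥ V⁻¹ *ᵥ (Λ *ᵥ α)| ≤
      Real.sqrt (y ⬝ᵥ Λ *ᵥ y) * Real.sqrt (α ⬝ᵥ Λ *ᵥ α) := by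
    rw [hswap]
    exact psd_cs N Λ hΛ.posSemidef y α
  have hVy : V *ᵥ y = x := by
    rw [hy, Matrix.mulVec_mulVec, Matrix.mul_nonsing_inv _ (isUnit_iff_ne_zero.2 hVpd.det_pos.ne'),
      Matrix.one_mulVec]
  have h2 : y ⬝ᵥ Λ *ᵥ y ≤ x ⬝ᵥ V⁻¹ *ᵥ x := by
    have hSy : 0 ≤ y ⬝ᵥ S *ᵥ y := by
      have := hS.dotProduct_mulVec_nonneg y; simpa using this
    have : y ⬝ᵥ V *ᵥ y = y ⬝ᵥ Λ *ᵥ y + y ⬝ᵥ S *ᵥ y := by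
      rw [hV, Matrix.add_mulVec, dotProduct_add]
    have hx : x ⬝ᵥ V⁻¹ *ᵥ x = y ⬝ᵥ V *ᵥ y := by
      rw [hswap, hVy]
    rw [hx, this]; linarith
  have h3 : Real.sqrt (y ⬝ᵥ Λ *ᵥ y) ≤ Real.sqrt (x ⬝ᵥ V⁻¹ *ᵥ x) :=
    Real.sqrt_le_sqrt h2
  calc |x ⬝ᵥ V⁻¹ *ᵥ (Λ *ᵥ α)| ≤ Real.sqrt (y ⬝ᵥ Λ *ᵥ y) * Real.sqrt (α ⬝ᵥ Λ *ᵥ α) := h1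
    _ ≤ Real.sqrt (x ⬝ᵥ V⁻¹ *ᵥ x) * Real.sqrt (α ⬝ᵥ Λ *ᵥ α) := by
        exact mul_le_mul_of_nonneg_right h3 (Real.sqrt_nonneg _)
    _ = _ := mul_comm _ _
end

section
/- Let Λ be a symmetric positive definite N×N real matrix, let y_1,…,y_m ∈ ℝ^N, and define W_1 = Λ and W_{s+1} = W_s + y_s y_sᵀ for s = 1,…,m. Let x ∈ ℝ^N be a vector such that ‖x‖_{W_s⁻¹} ≤ ‖y_s‖_{W_s⁻¹} for every s = 1,…,m (i.e., each y_s has the largest width among a set containing x). Then m · min(1, ‖x‖_{W_{m+1}⁻¹}) ≤ ∑_{s=1}^m min(1, ‖y_s‖_{W_s⁻¹}). -/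
open Matrix Finset

lemma vecMulVec_psd (N : ℕ) (v : Fin N → ℝ) : (vecMulVec v v).PosSemidef := by
  refine Matrix.PosSemidef.of_dotProduct_mulVec_nonneg ?_ ?_
  · ext i j
    simp [vecMulVec_apply, mul_comm]
  · intro z
    have : (vecMulVec v v) *ᵥ z = (v ⬝ᵥ z) • v := by
      ext i
      simp only [mulVec, vecMulVec_apply, dotProduct, Pi.smul_apply, smul_eq_mul,
        Finset.sum_mul]
      exact Finset.sum_congr rfl fun j _ => by ring
    rw [star_trivial, this, dotProduct_smul]
    have : z ⬝ᵥ v = v ⬝ᵥ z := dotProduct_comm _ _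
    rw [smul_eq_mul, this]
    exact mul_self_nonneg _

lemma sum_vecMulVec_psd (N : ℕ) (y : ℕ → Fin N → ℝ) (s : Finset ℕ) :
    (∑ u ∈ s, vecMulVec (y u) (y u)).PosSemidef := by
  classical
  induction s using Finset.induction with
  | empty => simpa using Matrix.PosSemidef.zero
  | insert _ _ h ih =>
    rw [Finset.sum_insert h]
    exact (vecMulVec_psd N _).add ih

lemma inv_quad_mono {N : ℕ} {A B : Matrix (Fin N) (Fin N) ℝ}
    (hA : A.PosDef) (hB : B.PosDef) (hAB : (B - A).PosSemidef) (x : Fin N → ℝ) :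
    x ⬝ᵥ B⁻¹ *ᵥ x ≤ x ⬝ᵥ A⁻¹ *ᵥ x := by
  set z := B⁻¹ *ᵥ x with hz
  set w := A⁻¹ *ᵥ x with hw
  have hAw : A *ᵥ w = x := by
    rw [hw, mulVec_mulVec, mul_nonsing_inv _ (isUnit_iff_isUnit_det _ |>.1 hA.isUnit),
      one_mulVec]
  have hBz : B *ᵥ z = x := by
    rw [hz, mulVec_mulVec, mul_nonsing_inv _ (isUnit_iff_isUnit_det _ |>.1 hB.isUnit),
      one_mulVec]
  have hsymA : ∀ u v : Fin N → ℝ, u ⬝ᵥ A *ᵥ v = (A *ᵥ u) ⬝ᵥ v := by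
    intro u v
    rw [dotProduct_mulVec, ← mulVec_transpose]
    congr 1
    rw [show Aᵀ = A from by simpa using hA.isHermitian.eq]
  have h1 : 0 ≤ (w - z) ⬝ᵥ A *ᵥ (w - z) := by
    simpa [star_trivial] using hA.posSemidef.dotProduct_mulVec_nonneg (w - z)
  have h2 : 0 ≤ z ⬝ᵥ (B - A) *ᵥ z := by
    simpa [star_trivial] using hAB.dotProduct_mulVec_nonneg z
  have e1 : (w - z) ⬝ᵥ A *ᵥ (w - z)
      = w ⬝ᵥ A *ᵥ w - w ⬝ᵥ A *ᵥ z - z ⬝ᵥ A *ᵥ w + z ⬝ᵥ A *ᵥ z := by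
    rw [mulVec_sub, dotProduct_sub, sub_dotProduct, sub_dotProduct]
    ring
  have e2 : z ⬝ᵥ (B - A) *ᵥ z = z ⬝ᵥ x - z ⬝ᵥ A *ᵥ z := by
    rw [sub_mulVec, dotProduct_sub, hBz]
  have e3 : w ⬝ᵥ A *ᵥ w = x ⬝ᵥ w := by
    rw [hsymA, hAw]
  have e4 : w ⬝ᵥ A *ᵥ z = x ⬝ᵥ z := by
    rw [hsymA, hAw]
  have e5 : z ⬝ᵥ A *ᵥ w = z ⬝ᵥ x := by
    rw [hAw]
  have e6 : z ⬝ᵥ x = x ⬝ᵥ z := dotProduct_comm _ _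
  rw [e1, e3, e4, e5, e6] at h1
  rw [e2, e6] at h2
  linarith

/-- Phase-width lemma: if `W_s = Λ + ∑_{u<s} y_u y_uᵀ` (0-indexed) and `x` has width
at most that of `y_s` at every step `s < m`, then
`m · min(1, ‖x‖_{W_m⁻¹}) ≤ ∑_{s<m} min(1, ‖y_s‖_{W_s⁻¹})`. -/
theorem stmt_15 (N m : ℕ) (Λ : Matrix (Fin N) (Fin N) ℝ) (hΛ : Λ.PosDef)
    (y : ℕ → Fin N → ℝ)
    (W : ℕ → Matrix (Fin N) (Fin N) ℝ)
    (hW : ∀ s, W s = Λ + ∑ u ∈ Finset.range s, vecMulVec (y u) (y u))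
    (x : Fin N → ℝ)
    (hwidth : ∀ s < m, Real.sqrt (x ⬝ᵥ (W s)⁻¹ *ᵥ x) ≤
      Real.sqrt (y s ⬝ᵥ (W s)⁻¹ *ᵥ y s)) :
    (m : ℝ) * min 1 (Real.sqrt (x ⬝ᵥ (W m)⁻¹ *ᵥ x)) ≤
      ∑ s ∈ Finset.range m, min 1 (Real.sqrt (y s ⬝ᵥ (W s)⁻¹ *ᵥ y s)) := by
  have hWpos : ∀ s, (W s).PosDef := by
    intro s
    rw [hW s]
    exact hΛ.add_posSemidef (sum_vecMulVec_psd N y _)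
  have key : ∀ s < m, min 1 (Real.sqrt (x ⬝ᵥ (W m)⁻¹ *ᵥ x)) ≤
      min 1 (Real.sqrt (y s ⬝ᵥ (W s)⁻¹ *ᵥ y s)) := by
    intro s hs
    refine min_le_min le_rfl (le_trans ?_ (hwidth s hs))
    apply Real.sqrt_le_sqrt
    apply inv_quad_mono (hWpos s) (hWpos m) _ x
    rw [hW m, hW s]
    have : (Λ + ∑ u ∈ Finset.range m, vecMulVec (y u) (y u)) -
        (Λ + ∑ u ∈ Finset.range s, vecMulVec (y u) (y u)) =
        ∑ u ∈ Finset.range m \ Finset.range s, vecMulVec (y u) (y u) := by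
      rw [← Finset.sum_sdiff (Finset.range_subset_range.2 hs.le)]
      abel
    rw [this]
    exact sum_vecMulVec_psd N y _
  calc (m : ℝ) * min 1 (Real.sqrt (x ⬝ᵥ (W m)⁻¹ *ᵥ x))
      = ∑ _s ∈ Finset.range m, min 1 (Real.sqrt (x ⬝ᵥ (W m)⁻¹ *ᵥ x)) := by
        rw [Finset.sum_const, Finset.card_range, nsmul_eq_mul]
    _ ≤ _ := Finset.sum_le_sum fun s hs => key s (Finset.mem_range.1 hs)
end

section
/- Fix positive reals λ and T, positive integers K and M with M ≥ T/K, and consider the N = K·M eigenvalues λ_1 = … = λ_K = λ and λ_{K+1} = … = λ_{KM} = λ + M (the eigenvalues of Λ_L + λI, where Λ_L is the Laplacian spectrum of K disjoint complete graphs on M vertices each). Then the maximum of ∑_{i=1}^{KM} log(1 + t_i/λ_i) over nonnegative reals t_1,…,t_{KM} with ∑ t_i = T is attained at t_1 = … = t_K = T/K and t_i = 0 for i > K, its value equals K·log(1 + T/(Kλ)), and consequently the effective dimension d = ⌈ (max ∑_i log(1 + t_i/λ_i)) / log(1 + T/(Kλ)) ⌉ equals K. -/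
open Finset

lemma jensen_log (n : ℕ) (hn : 0 < n) (f : ℕ → ℝ) (hf : ∀ i ∈ Finset.range n, 0 < f i) :
    ∑ i ∈ Finset.range n, Real.log (f i) ≤
      n * Real.log ((∑ i ∈ Finset.range n, f i) / n) := by
  have hn' : (0:ℝ) < n := Nat.cast_pos.mpr hn
  have h := (strictConcaveOn_log_Ioi.concaveOn).le_map_sum (t := Finset.range n)
    (w := fun _ => (n:ℝ)⁻¹) (p := f)
    (fun i _ => by positivity)
    (by simp [Finset.sum_const, hn'.ne'])
    (fun i hi => hf i hi)
  simp only [smul_eq_mul, ← Finset.mul_sum] at h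
  rw [div_eq_inv_mul]
  calc ∑ i ∈ Finset.range n, Real.log (f i)
      = n * ((n:ℝ)⁻¹ * ∑ i ∈ Finset.range n, Real.log (f i)) := by
        field_simp
    _ ≤ n * Real.log ((n:ℝ)⁻¹ * ∑ i ∈ Finset.range n, f i) := by
        gcongr

/-- Lower-bound instance: with `N = K·M` eigenvalues `λ_1 = … = λ_K = λ` and
`λ_{K+1} = … = λ_{KM} = λ + M`, where `M ≥ T/K`, the maximum of
`∑ log(1 + t_i/λ_i)` over the simplex `{t ≥ 0, ∑ t_i = T}` is attained at
`t_1 = … = t_K = T/K`, `t_i = 0` for `i > K`, equals `K·log(1 + T/(Kλ))`, and the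
effective dimension equals `K`. -/
theorem stmt_17 (lambda T : ℝ) (hlambda : 0 < lambda) (hT : 0 < T)
    (K M : ℕ) (hK : 1 ≤ K) (hM : 1 ≤ M) (hMT : T / K ≤ (M : ℝ))
    (lam : ℕ → ℝ) (hlam : ∀ i, lam i = if i < K then lambda else lambda + M)
    (topt : ℕ → ℝ) (htopt : ∀ i, topt i = if i < K then T / K else 0) :
    (∀ i < K * M, 0 ≤ topt i) ∧
      (∑ i ∈ Finset.range (K * M), topt i = T) ∧
      (∑ i ∈ Finset.range (K * M), Real.log (1 + topt i / lam i) =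
        (K : ℝ) * Real.log (1 + T / (K * lambda))) ∧
      (∀ s : ℕ → ℝ, (∀ i < K * M, 0 ≤ s i) →
        (∑ i ∈ Finset.range (K * M), s i = T) →
        ∑ i ∈ Finset.range (K * M), Real.log (1 + s i / lam i) ≤
          (K : ℝ) * Real.log (1 + T / (K * lambda))) ∧
      ⌈(sSup {y : ℝ | ∃ t : ℕ → ℝ, (∀ i < K * M, 0 ≤ t i) ∧
          (∑ i ∈ Finset.range (K * M), t i = T) ∧
          y = ∑ i ∈ Finset.range (K * M), Real.log (1 + t i / lam i)}) /
        Real.log (1 + T / (K * lambda))⌉ = (K : ℤ) := by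
  have hK0 : (0:ℝ) < K := by exact_mod_cast hK
  have hM0 : (0:ℝ) < M := by exact_mod_cast hM
  have hKM : K ≤ K * M := Nat.le_mul_of_pos_right K hM
  have hKl : (0:ℝ) < K * lambda := by positivity
  set L := Real.log (1 + T / (K * lambda)) with hLdef
  have hL : 0 < L := Real.log_pos (by nlinarith [div_pos hT hKl])
  have hkey : T / K / lambda = T / (K * lambda) := by rw [div_div]
  -- part 1
  have part1 : ∀ i < K * M, 0 ≤ topt i := by
    intro i _
    rw [htopt i]
    split
    · positivity
    · exact le_rfl
  -- part 2
  have part2 : ∑ i ∈ Finset.range (K * M), topt i = T := by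
    rw [← Finset.sum_range_add_sum_Ico _ hKM]
    have h1 : ∑ i ∈ Finset.range K, topt i = T := by
      rw [Finset.sum_congr rfl (fun i hi => by
        rw [htopt i, if_pos (Finset.mem_range.mp hi)])]
      rw [Finset.sum_const, Finset.card_range, nsmul_eq_mul]
      field_simp
    have h2 : ∑ i ∈ Finset.Ico K (K*M), topt i = 0 :=
      Finset.sum_eq_zero (fun i hi => by
        rw [htopt i, if_neg (not_lt.mpr (Finset.mem_Ico.mp hi).1)])
    rw [h1, h2, add_zero]
  -- part 3
  have part3 : ∑ i ∈ Finset.range (K * M), Real.log (1 + topt i / lam i) =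
      (K : ℝ) * L := by
    rw [← Finset.sum_range_add_sum_Ico _ hKM]
    have h1 : ∑ i ∈ Finset.range K, Real.log (1 + topt i / lam i) = K * L := by
      have hterm : ∀ i ∈ Finset.range K, Real.log (1 + topt i / lam i) = L := by
        intro i hi
        have hi' := Finset.mem_range.mp hi
        rw [htopt i, hlam i, if_pos hi', if_pos hi', hkey]
      rw [Finset.sum_congr rfl hterm, Finset.sum_const, Finset.card_range, nsmul_eq_mul]
    have h2 : ∑ i ∈ Finset.Ico K (K*M), Real.log (1 + topt i / lam i) = 0 :=
      Finset.sum_eq_zero (fun i hi => by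
        rw [htopt i, if_neg (not_lt.mpr (Finset.mem_Ico.mp hi).1)]
        simp)
    rw [h1, h2, add_zero]
  -- part 4
  have part4 : ∀ s : ℕ → ℝ, (∀ i < K * M, 0 ≤ s i) →
      (∑ i ∈ Finset.range (K * M), s i = T) →
      ∑ i ∈ Finset.range (K * M), Real.log (1 + s i / lam i) ≤ (K : ℝ) * L := by
    intro s hs hsum
    set S := ∑ i ∈ Finset.range K, s i with hSdef
    have hs' : ∀ i ∈ Finset.range K, 0 ≤ s i := fun i hi =>
      hs i (lt_of_lt_of_le (Finset.mem_range.mp hi) hKM)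
    have hS0 : 0 ≤ S := Finset.sum_nonneg hs'
    have htail : ∑ i ∈ Finset.Ico K (K*M), s i = T - S := by
      have := Finset.sum_range_add_sum_Ico s hKM
      rw [hsum] at this; linarith [this]
    have htail0 : 0 ≤ T - S := by
      rw [← htail]
      exact Finset.sum_nonneg (fun i hi => hs i (Finset.mem_Ico.mp hi).2)
    rw [← Finset.sum_range_add_sum_Ico _ hKM]
    -- head bound
    have hhead : ∑ i ∈ Finset.range K, Real.log (1 + s i / lam i) ≤
        K * (Real.log (lambda + S / K) - Real.log lambda) := by
      have hrw : ∀ i ∈ Finset.range K, Real.log (1 + s i / lam i) =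
          Real.log (lambda + s i) - Real.log lambda := by
        intro i hi
        have hi' := Finset.mem_range.mp hi
        have h1 : (1 : ℝ) + s i / lam i = (lambda + s i) / lambda := by
          rw [hlam i, if_pos hi']
          field_simp
        have hpos : (0:ℝ) < lambda + s i := by linarith [hs' i hi]
        rw [h1, Real.log_div hpos.ne' hlambda.ne']
      rw [Finset.sum_congr rfl hrw, Finset.sum_sub_distrib, Finset.sum_const,
        Finset.card_range, nsmul_eq_mul]
      have hj := jensen_log K hK (fun i => lambda + s i)
        (fun i hi => by simpa using (by linarith [hs' i hi] : (0:ℝ) < lambda + s i))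
      have hsum2 : (∑ i ∈ Finset.range K, (lambda + s i)) = K * lambda + S := by
        rw [Finset.sum_add_distrib, Finset.sum_const, Finset.card_range, nsmul_eq_mul]
      rw [hsum2] at hj
      have : (K * lambda + S) / K = lambda + S / K := by field_simp
      rw [this] at hj
      linarith
    -- tail bound
    have htailb : ∑ i ∈ Finset.Ico K (K*M), Real.log (1 + s i / lam i) ≤
        (T - S) / (lambda + M) := by
      rw [← htail, Finset.sum_div]
      apply Finset.sum_le_sum
      intro i hi
      have hi' := (Finset.mem_Ico.mp hi).1
      have hsi : 0 ≤ s i := hs i (Finset.mem_Ico.mp hi).2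
      rw [hlam i, if_neg (not_lt.mpr hi')]
      have hx : (0:ℝ) < 1 + s i / (lambda + M) := by positivity
      have := Real.log_le_sub_one_of_pos hx
      linarith
    -- combine
    have hcomb : K * (Real.log (lambda + S / K) - Real.log lambda) +
        (T - S) / (lambda + M) ≤ (K : ℝ) * L := by
      have hLrw : L = Real.log (lambda + T / K) - Real.log lambda := by
        rw [hLdef]
        have : (1 : ℝ) + T / (K * lambda) = (lambda + T / K) / lambda := by
          field_simp
        rw [this, Real.log_div (by positivity) hlambda.ne']
      have ha : (0:ℝ) < lambda + S / K := by positivity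
      have hb : (0:ℝ) < lambda + T / K := by positivity
      have hbc : lambda + T / K ≤ lambda + M := by linarith
      have hlog : 1 - (lambda + S / K) / (lambda + T / K) ≤
          Real.log (lambda + T / K) - Real.log (lambda + S / K) := by
        have := Real.one_sub_inv_le_log_of_pos (div_pos hb ha)
        rw [Real.log_div hb.ne' ha.ne'] at this
        have hinv : ((lambda + T / K) / (lambda + S / K))⁻¹ =
            (lambda + S / K) / (lambda + T / K) := by
          rw [inv_div]
        rw [hinv] at this
        linarith
      have h1 : 1 - (lambda + S / K) / (lambda + T / K) = (T - S) / (K * (lambda + T / K)) := by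
        field_simp
        ring
      have h2 : (T - S) / (lambda + M) ≤ (T - S) / (lambda + T / K) := by
        gcongr
      have h3 : (T - S) / (lambda + T / K) = K * ((T - S) / (K * (lambda + T / K))) := by
        field_simp
      rw [hLrw]
      rw [h1] at hlog
      nlinarith [mul_le_mul_of_nonneg_left hlog (le_of_lt hK0)]
    linarith
  refine ⟨part1, part2, by rw [part3], part4, ?_⟩
  -- part 5
  have hset : sSup {y : ℝ | ∃ t : ℕ → ℝ, (∀ i < K * M, 0 ≤ t i) ∧
      (∑ i ∈ Finset.range (K * M), t i = T) ∧
      y = ∑ i ∈ Finset.range (K * M), Real.log (1 + t i / lam i)} = (K:ℝ) * L := by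
    have hmem : (K:ℝ) * L ∈ {y : ℝ | ∃ t : ℕ → ℝ, (∀ i < K * M, 0 ≤ t i) ∧
        (∑ i ∈ Finset.range (K * M), t i = T) ∧
        y = ∑ i ∈ Finset.range (K * M), Real.log (1 + t i / lam i)} :=
      ⟨topt, part1, part2, part3.symm⟩
    apply le_antisymm
    · apply csSup_le (Set.nonempty_of_mem hmem)
      rintro y ⟨t, ht0, htsum, rfl⟩
      exact part4 t ht0 htsum
    · apply le_csSup
      · exact ⟨(K:ℝ)*L, by rintro y ⟨t, ht0, htsum, rfl⟩; exact part4 t ht0 htsum⟩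
      · exact hmem
  rw [hset, mul_div_assoc, div_self hL.ne', mul_one, Int.ceil_natCast]
end
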